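/- Let e₁, e₂, e₃ ∈ ℝ² satisfy e₁ + e₂ + e₃ = 0 with e₁ and e₂ linearly independent, and let S̄ = (s̄₁,s̄₂,s̄₃) ∈ ℝ³ with all s̄ᵢ > 0. Then for every s_c ∈ ℝ: ‖R(e)ᵀ(r(e) − s̃*(e) S̄)‖² − ‖R(e)ᵀ(r(e) − s_c S̄)‖² = −(1/s_D(e)) · ((r(e) − s_c S̄)ᵀ D r(e))² ≤ 0, with equality if and only if s_c = s̃*(e). In particular, the instantaneous cost with the time-varying scale s̃*(e) never exceeds the instantaneous cost with any constant scale s_c. -/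

import Mathlib

open Matrix

noncomputable section

/-- The plane `ℝ²` with the Euclidean norm. -/
abbrev E2 := EuclideanSpace ℝ (Fin 2)

/-- Oriented incidence matrix of the triangle graph. -/
def Hmat : Matrix (Fin 3) (Fin 3) ℝ := !![-1, 1, 0; 0, -1, 1; 1, 0, -1]

/-- Expanded incidence matrix `Ĥ = H ⊗ I₂`. -/
def Hhat : Matrix (Fin 3 × Fin 2) (Fin 3 × Fin 2) ℝ :=
  Matrix.kroneckerMap (· * ·) Hmat (1 : Matrix (Fin 2) (Fin 2) ℝ)

/-- `Λ(e) ∈ ℝ^{6×3}`: block-diagonal matrix with `2×1` blocks `e₁, e₂, e₃`. -/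
def Lam (e : Fin 3 → E2) : Matrix (Fin 3 × Fin 2) (Fin 3) ℝ :=
  fun p j => if p.1 = j then e j p.2 else 0

/-- The rigidity matrix `R(e) = Λ(e)ᵀ Ĥ ∈ ℝ^{3×6}`. -/
def Rmat (e : Fin 3 → E2) : Matrix (Fin 3) (Fin 3 × Fin 2) ℝ := (Lam e)ᵀ * Hhat

/-- The rigidity function `r(e)ᵢ = ½‖eᵢ‖²`. -/
def rvec (e : Fin 3 → E2) : Fin 3 → ℝ := fun i => (1 / 2) * ‖e i‖ ^ 2

/-- The matrix `D` built from the desired shape `S̄ = (s̄₁, s̄₂, s̄₃)`. -/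
def Dmat (sb : Fin 3 → ℝ) : Matrix (Fin 3) (Fin 3) ℝ :=
  !![4 * sb 0 + sb 1 + sb 2, sb 1 - sb 2, sb 2 - sb 1;
     sb 0 - sb 2, sb 0 + 4 * sb 1 + sb 2, sb 2 - sb 0;
     sb 0 - sb 1, sb 1 - sb 0, sb 0 + sb 1 + 4 * sb 2]

/-- `s_N(e) = r(e)ᵀ D r(e)`. -/
def sN (sb : Fin 3 → ℝ) (e : Fin 3 → E2) : ℝ := rvec e ⬝ᵥ (Dmat sb *ᵥ rvec e)

/-- `s_D(e) = S̄ᵀ D r(e)`. -/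
def sD (sb : Fin 3 → ℝ) (e : Fin 3 → E2) : ℝ := sb ⬝ᵥ (Dmat sb *ᵥ rvec e)

/-- The time-varying scale function `s̃*(e) = s_N(e)/s_D(e)`. -/
def stilde (sb : Fin 3 → ℝ) (e : Fin 3 → E2) : ℝ := sN sb e / sD sb e

/-- The instantaneous cost `‖R(e)ᵀ (r(e) − θ S̄)‖²` at scale `θ`. -/
def cost (sb : Fin 3 → ℝ) (e : Fin 3 → E2) (θ : ℝ) : ℝ :=
  ((Rmat e)ᵀ *ᵥ (rvec e - θ • sb)) ⬝ᵥ ((Rmat e)ᵀ *ᵥ (rvec e - θ • sb))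

/-- The control gain `M(e) = s_D² I₃ − s_D S̄ r(e)ᵀ (Dᵀ + D) + s_N S̄ S̄ᵀ D`. -/
def Mmat (sb : Fin 3 → ℝ) (e : Fin 3 → E2) : Matrix (Fin 3) (Fin 3) ℝ :=
  (sD sb e) ^ 2 • (1 : Matrix (Fin 3) (Fin 3) ℝ)
    - (sD sb e) • (vecMulVec sb (rvec e) * ((Dmat sb)ᵀ + Dmat sb))
    + (sN sb e) • (vecMulVec sb sb * Dmat sb)

/-- `N(e) = (1/s_D²)(s_D Λ(e)(Dᵀ + D) r(e) − s_N Λ(e) Dᵀ S̄) ∈ ℝ⁶`,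
the gradient of the scale function `s̃*`. -/
def Nvec (sb : Fin 3 → ℝ) (e : Fin 3 → E2) : Fin 3 × Fin 2 → ℝ :=
  (1 / (sD sb e) ^ 2) •
    ((sD sb e) • (Lam e *ᵥ (((Dmat sb)ᵀ + Dmat sb) *ᵥ rvec e))
      - (sN sb e) • (Lam e *ᵥ ((Dmat sb)ᵀ *ᵥ sb)))

end

/-! On a closed triangle the Gram matrix of the edges is determined by `r(e)` (polarization:
`⟪e₀, e₁⟫ = ½(‖e₂‖² − ‖e₀‖² − ‖e₁‖²)`), and this gives `R(e) R(e)ᵀ S̄ = D r(e)`. Hence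
`θ ↦ ‖R(e)ᵀ(r(e) − θ S̄)‖²` is the parabola `c − 2 s_N θ + s_D θ²` with `s_D = ‖R(e)ᵀ S̄‖²`.
Non-collinearity makes `R(e)ᵀ S̄ ≠ 0`, so `s_D > 0` and `s̃* = s_N / s_D` is the vertex of the
parabola; completing the square gives the identity. -/

lemma Rmat_apply (e : Fin 3 → E2) (i k : Fin 3) (a : Fin 2) :
    Rmat e i (k, a) = Hmat i k * e i a := by
  simp [Rmat, Hhat, Lam, mul_apply, Fintype.sum_prod_type, one_apply, mul_comm]

lemma Rmat_mul_transpose_apply (e : Fin 3 → E2) (i j : Fin 3) :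
    (Rmat e * (Rmat e)ᵀ) i j = (Hmat * Hmatᵀ) i j * inner ℝ (e i) (e j) := by
  simp only [mul_apply, transpose_apply, Fintype.sum_prod_type, Rmat_apply, PiLp.inner_apply,
    Fin.sum_univ_three, Fin.sum_univ_two, RCLike.inner_apply, Real.ringHom_apply]
  ring

lemma Hmat_mul_transpose : Hmat * Hmatᵀ = !![2, -1, -1; -1, 2, -1; -1, -1, 2] := by
  ext i j
  fin_cases i <;> fin_cases j <;> simp [Hmat, mul_apply, Fin.sum_univ_three] <;> norm_num

lemma real_inner_eq_of_add_add_eq_zero {F : Type*} [NormedAddCommGroup F] [InnerProductSpace ℝ F]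
    {a b c : F} (h : a + b + c = 0) : inner ℝ a b = (‖c‖ ^ 2 - ‖a‖ ^ 2 - ‖b‖ ^ 2) / 2 := by
  rw [eq_neg_of_add_eq_zero_right h, norm_neg, norm_add_sq_real]
  ring

lemma Rmat_mul_transpose_mulVec {e : Fin 3 → E2} (hsum : e 0 + e 1 + e 2 = 0) (sb : Fin 3 → ℝ) :
    (Rmat e * (Rmat e)ᵀ) *ᵥ sb = Dmat sb *ᵥ rvec e := by
  have h01 := real_inner_eq_of_add_add_eq_zero hsum
  have h12 := real_inner_eq_of_add_add_eq_zero (a := e 1) (b := e 2) (c := e 0)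
    (by rw [← hsum]; abel)
  have h20 := real_inner_eq_of_add_add_eq_zero (a := e 2) (b := e 0) (c := e 1)
    (by rw [← hsum]; abel)
  ext i
  simp only [mulVec, dotProduct, Fin.sum_univ_three, Rmat_mul_transpose_apply, Hmat_mul_transpose]
  fin_cases i <;>
    simp only [Dmat, rvec, Fin.zero_eta, Fin.mk_one, Fin.reduceFinMk, Fin.isValue, of_apply,
      cons_val', cons_val_zero, cons_val_one, cons_val, cons_val_fin_one,
      real_inner_self_eq_norm_sq, real_inner_comm (e 0) (e 1), real_inner_comm (e 1) (e 2),
      real_inner_comm (e 2) (e 0), h01, h12, h20] <;> ring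

lemma transpose_mulVec_dotProduct {m n : Type*} [Fintype m] [Fintype n] (A : Matrix m n ℝ)
    (u w : m → ℝ) : (Aᵀ *ᵥ u) ⬝ᵥ (Aᵀ *ᵥ w) = u ⬝ᵥ (A * Aᵀ) *ᵥ w := by
  rw [← mulVec_mulVec, dotProduct_mulVec u, ← vecMul_transpose Aᵀ u, transpose_transpose]

lemma Rmat_transpose_mulVec_ne_zero {e : Fin 3 → E2} (hind : LinearIndependent ℝ ![e 0, e 1])
    {v : Fin 3 → ℝ} (hv : v 0 ≠ 0) : (Rmat e)ᵀ *ᵥ v ≠ 0 := by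
  intro h
  refine hv (LinearIndependent.pair_iff.mp hind (v 0) (-v 1) ?_).1
  ext a
  have := congrFun h (1, a)
  simp only [mulVec, dotProduct, transpose_apply, Rmat_apply, Hmat, of_apply, cons_val',
    cons_val_one, cons_val_zero, cons_val_fin_one, Fin.sum_univ_three, one_mul, neg_mul, cons_val,
    zero_mul, add_zero, Pi.zero_apply] at this
  simp only [neg_smul, PiLp.add_apply, PiLp.smul_apply, smul_eq_mul, PiLp.neg_apply,
    PiLp.zero_apply]
  linarith

section Triangle

variable {e : Fin 3 → E2} (sb : Fin 3 → ℝ)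

lemma sN_eq_dotProduct (hsum : e 0 + e 1 + e 2 = 0) :
    sN sb e = ((Rmat e)ᵀ *ᵥ rvec e) ⬝ᵥ ((Rmat e)ᵀ *ᵥ sb) := by
  rw [transpose_mulVec_dotProduct, Rmat_mul_transpose_mulVec hsum, sN]

lemma sD_eq_dotProduct (hsum : e 0 + e 1 + e 2 = 0) :
    sD sb e = ((Rmat e)ᵀ *ᵥ sb) ⬝ᵥ ((Rmat e)ᵀ *ᵥ sb) := by
  rw [transpose_mulVec_dotProduct, Rmat_mul_transpose_mulVec hsum, sD]

lemma cost_eq_quadratic (hsum : e 0 + e 1 + e 2 = 0) (θ : ℝ) :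
    cost sb e θ = cost sb e 0 - 2 * sN sb e * θ + sD sb e * θ ^ 2 := by
  simp only [cost, sN_eq_dotProduct sb hsum, sD_eq_dotProduct sb hsum, zero_smul, sub_zero,
    mulVec_sub, mulVec_smul, dotProduct_sub, sub_dotProduct, dotProduct_smul, smul_dotProduct,
    smul_eq_mul, dotProduct_comm ((Rmat e)ᵀ *ᵥ sb)]
  ring

lemma sD_pos (hsum : e 0 + e 1 + e 2 = 0) (hind : LinearIndependent ℝ ![e 0, e 1])
    (h0 : sb 0 ≠ 0) : 0 < sD sb e := by
  simpa [sD_eq_dotProduct sb hsum] using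
    dotProduct_star_self_pos_iff.mpr (Rmat_transpose_mulVec_ne_zero hind h0)

end Triangle

/-- For a non-collinear closed triangle and a shape `S̄` with
positive entries, for every constant scale `s_c ∈ ℝ`:
`‖R(e)ᵀ(r(e) − s̃*(e)S̄)‖² − ‖R(e)ᵀ(r(e) − s_c S̄)‖²
  = −(1/s_D(e))·((r(e) − s_c S̄)ᵀ D r(e))² ≤ 0`,
with equality iff `s_c = s̃*(e)`.  In particular the instantaneous cost with
the time-varying scale never exceeds that with any constant scale. -/
theorem cost_stilde_le_cost_const (e : Fin 3 → E2) (hsum : e 0 + e 1 + e 2 = 0)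
    (hind : LinearIndependent ℝ ![e 0, e 1])
    (sb : Fin 3 → ℝ) (hsb : ∀ i, 0 < sb i) :
    ∀ sc : ℝ,
      (cost sb e (stilde sb e) - cost sb e sc =
        -(1 / sD sb e) * ((rvec e - sc • sb) ⬝ᵥ (Dmat sb *ᵥ rvec e)) ^ 2) ∧
      cost sb e (stilde sb e) ≤ cost sb e sc ∧
      (cost sb e (stilde sb e) = cost sb e sc ↔ sc = stilde sb e) := by
  intro sc
  have hD : 0 < sD sb e := sD_pos sb hsum hind (hsb 0).ne'
  have hdot : (rvec e - sc • sb) ⬝ᵥ (Dmat sb *ᵥ rvec e) = sN sb e - sc * sD sb e := by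
    rw [sub_dotProduct, smul_dotProduct, smul_eq_mul, sN, sD]
  have hgap : cost sb e (stilde sb e) - cost sb e sc =
      -(1 / sD sb e) * (sN sb e - sc * sD sb e) ^ 2 := by
    rw [cost_eq_quadratic sb hsum, cost_eq_quadratic sb hsum sc, stilde]
    field_simp
    ring
  rw [hdot]
  refine ⟨hgap, ?_, ?_⟩
  · have : 0 ≤ 1 / sD sb e * (sN sb e - sc * sD sb e) ^ 2 := by positivity
    linarith
  · rw [← sub_eq_zero, hgap, stilde, eq_div_iff hD.ne']
    simp [hD.ne', sub_eq_zero, eq_comm]
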